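/- arXiv:1509.07991 — 3 statements merged into one kernel-verified Lean document; each statement's English description precedes it below -/
import Mathlib

section
/- Let A be a unital real Banach algebra and let p : [0,1] → A be a continuous map such that p(t)² = p(t) for every t ∈ [0,1] (a continuous family of idempotents). Then there exists a unit u of A such that u · p(0) · u⁻¹ = p(1); in particular the idempotents p(0) and p(1) are conjugate in A. -/
/-- Local step: two idempotents `a`, `b` with `‖(2*a - 1) * (b - a)‖ < 1` are conjugate. -/
lemma conj_of_close {A : Type*} [NormedRing A] [CompleteSpace A] {a b : A}
    (ha : a * a = a) (hb : b * b = b)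
    (h : ‖(a + a - 1) * (b - a)‖ < 1) :
    ∃ u : Aˣ, (u : A) * b * (↑u⁻¹ : A) = a := by
  have hnorm : ‖-((a + a - 1) * (b - a))‖ < 1 := by rwa [norm_neg]
  refine ⟨Units.oneSub _ hnorm, ?_⟩
  set u := Units.oneSub (-((a + a - 1) * (b - a))) hnorm with hu
  have hval : (u : A) = 1 - a - b + (a * b + a * b) := by
    rw [hu, Units.val_oneSub, sub_neg_eq_add]
    have hx : (a + a - 1) * (b - a) = a * b + a * b - b - (a * a) - (a * a) + a := by
      noncomm_ring
    rw [hx, ha]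
    noncomm_ring
  have key : (u : A) * b = a * (u : A) := by
    rw [hval]
    have h1 : (1 - a - b + (a * b + a * b)) * b
        = b - a * b - b * b + (a * (b * b) + a * (b * b)) := by noncomm_ring
    have h2 : a * (1 - a - b + (a * b + a * b))
        = a - a * a - a * b + (a * a * b + a * a * b) := by noncomm_ring
    rw [h1, h2, hb, ha]
    noncomm_ring
  rw [key]
  exact u.mul_inv_cancel_right a

/-- Let `A` be a unital real Banach algebra and `p : [0,1] → A` a continuous
family of idempotents.  Then there is a unit `u` of `A` with `u · p(0) · u⁻¹ = p(1)`;
in particular `p(0)` and `p(1)` are conjugate idempotents. -/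
theorem continuous_family_of_idempotents_conjugate
    {A : Type*} [NormedRing A] [NormedAlgebra ℝ A] [CompleteSpace A]
    (p : ℝ → A) (hcont : ContinuousOn p (Set.Icc 0 1))
    (hidem : ∀ t ∈ Set.Icc (0 : ℝ) 1, p t * p t = p t) :
    ∃ u : Aˣ, (u : A) * p 0 * (↑u⁻¹ : A) = p 1 := by
  -- A uniform bound on `‖p t‖`
  obtain ⟨M, hM⟩ := isCompact_Icc.exists_bound_of_continuousOn hcont
  have hM0 : 0 ≤ M := le_trans (norm_nonneg _) (hM 0 ⟨le_refl 0, zero_le_one⟩)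
  set C : ℝ := 2 * M + ‖(1 : A)‖ + 1 with hC
  have hCpos : 0 < C := by positivity
  set ε : ℝ := 1 / C with hε
  have hεpos : 0 < ε := by positivity
  -- uniform continuity
  have hu : UniformContinuousOn p (Set.Icc 0 1) :=
    isCompact_Icc.uniformContinuousOn_of_continuous hcont
  rw [Metric.uniformContinuousOn_iff] at hu
  obtain ⟨δ, hδpos, hδ⟩ := hu ε hεpos
  set d : ℝ := δ / 2 with hd
  have hdpos : 0 < d := by positivity
  -- the chain argument
  have chain : ∀ n : ℕ, ∃ u : Aˣ,
      (u : A) * p 0 * (↑u⁻¹ : A) = p (min (n * d) 1) := by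
    intro n
    induction n with
    | zero => exact ⟨1, by simp⟩
    | succ n ih =>
      obtain ⟨u, hu'⟩ := ih
      set s : ℝ := min (n * d) 1 with hs
      set t : ℝ := min ((n + 1 : ℕ) * d) 1 with ht
      have hsmem : s ∈ Set.Icc (0 : ℝ) 1 :=
        ⟨le_min (by positivity) zero_le_one, min_le_right _ _⟩
      have htmem : t ∈ Set.Icc (0 : ℝ) 1 :=
        ⟨le_min (by positivity) zero_le_one, min_le_right _ _⟩
      have hdist : dist t s < δ := by
        have h1 : |t - s| ≤ max |((n + 1 : ℕ) * d) - n * d| |(1 : ℝ) - 1| :=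
          abs_min_sub_min_le_max _ _ _ _
        have h2 : max |((n + 1 : ℕ) * d) - n * d| |(1 : ℝ) - 1| = d := by
          push_cast
          rw [show ((n : ℝ) + 1) * d - n * d = d by ring, abs_of_pos hdpos]
          simp [le_of_lt hdpos]
        rw [Real.dist_eq]
        calc |t - s| ≤ d := h1.trans_eq h2
          _ < δ := by rw [hd]; linarith
      have hclose : ‖p s - p t‖ < ε := by
        have := hδ t htmem s hsmem hdist
        rwa [dist_eq_norm, norm_sub_rev] at this
      have hkey : ‖(p t + p t - 1) * (p s - p t)‖ < 1 := by
        calc ‖(p t + p t - 1) * (p s - p t)‖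
            ≤ ‖p t + p t - 1‖ * ‖p s - p t‖ := norm_mul_le _ _
          _ ≤ C * ‖p s - p t‖ := by
              apply mul_le_mul_of_nonneg_right _ (norm_nonneg _)
              calc ‖p t + p t - 1‖ ≤ ‖p t + p t‖ + ‖(1 : A)‖ := norm_sub_le _ _
                _ ≤ ‖p t‖ + ‖p t‖ + ‖(1 : A)‖ := by
                    have := norm_add_le (p t) (p t)
                    linarith
                _ ≤ C := by
                    have := hM t htmem
                    rw [hC]; linarith
          _ < C * ε := by
              exact mul_lt_mul_of_pos_left hclose hCpos
          _ = 1 := by rw [hε]; field_simp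
      obtain ⟨v, hv⟩ := conj_of_close (hidem t htmem) (hidem s hsmem) hkey
      refine ⟨v * u, ?_⟩
      rw [mul_inv_rev]
      push_cast
      calc (v : A) * u * p 0 * ((↑u⁻¹ : A) * (↑v⁻¹ : A))
          = (v : A) * ((u : A) * p 0 * (↑u⁻¹ : A)) * (↑v⁻¹ : A) := by
            noncomm_ring
        _ = (v : A) * p s * (↑v⁻¹ : A) := by rw [hu']
        _ = p t := hv
  -- choose n large enough
  obtain ⟨n, hn⟩ := exists_nat_ge (1 / d)
  obtain ⟨u, hu'⟩ := chain n
  have : min ((n : ℝ) * d) 1 = 1 := by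
    rw [min_eq_right]
    rw [div_le_iff₀ hdpos] at hn
    linarith
  rw [this] at hu'
  exact ⟨u, hu'⟩
end

section
/- Let A be a finite-dimensional simple ℝ-algebra and let τ be a ring involution of A (a ring automorphism with τ∘τ = id). Let G = ℤ/2 act on A via τ. Then the twisted group ring A⋊G is a semisimple ring. -/
set_option linter.unusedSectionVars false

noncomputable section

namespace Paper

variable (A : Type*) [Ring A] (G : Type*) [Group G] [MulSemiringAction G A]

/-- The twisted group ring (crossed product) `A⋊G`: the free left `A`-module with basis `G`,
with multiplication determined by `(a·g)(b·h) = (a * g(b))·(gh)`. -/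
def CrossedProduct : Type _ := G →₀ A

namespace CrossedProduct

instance : AddCommGroup (CrossedProduct A G) := inferInstanceAs (AddCommGroup (G →₀ A))

instance {k : Type*} [Semiring k] [Module k A] : Module k (CrossedProduct A G) :=
  inferInstanceAs (Module k (G →₀ A))

variable {A G}

/-- The element `a·g` of the crossed product. -/
def single (g : G) (a : A) : CrossedProduct A G := Finsupp.single g a

theorem single_add (g : G) (a b : A) :
    (single g (a + b) : CrossedProduct A G) = single g a + single g b :=
  Finsupp.single_add g a b

theorem single_zero (g : G) : (single g 0 : CrossedProduct A G) = 0 :=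
  Finsupp.single_zero g

theorem induction_linear {p : CrossedProduct A G → Prop} (f : CrossedProduct A G)
    (h0 : p 0) (hadd : ∀ f g, p f → p g → p (f + g)) (hsingle : ∀ (g : G) (a : A), p (single g a)) :
    p f :=
  Finsupp.induction_linear f h0 hadd hsingle

noncomputable instance : Mul (CrossedProduct A G) :=
  ⟨fun f h => Finsupp.sum (f : G →₀ A) fun g a =>
    Finsupp.sum (h : G →₀ A) fun g' b => Finsupp.single (g * g') (a * g • b)⟩

theorem mul_def (f h : CrossedProduct A G) :
    f * h = Finsupp.sum (f : G →₀ A) fun g a =>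
      Finsupp.sum (h : G →₀ A) fun g' b =>
        (single (g * g') (a * g • b) : CrossedProduct A G) := rfl

noncomputable instance : One (CrossedProduct A G) := ⟨single 1 1⟩

theorem one_def : (1 : CrossedProduct A G) = single 1 1 := rfl

private theorem mul_zero' (f : CrossedProduct A G) : f * 0 = 0 := by
  revert f
  show ∀ f : G →₀ A, (Finsupp.sum f fun g a => Finsupp.sum (0 : G →₀ A) fun g' b =>
    (Finsupp.single (g * g') (a * g • b) : G →₀ A)) = 0
  simp

private theorem zero_mul' (f : CrossedProduct A G) : 0 * f = 0 :=
  Finsupp.sum_zero_index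

private theorem mul_add' (f h k : CrossedProduct A G) : f * (h + k) = f * h + f * k := by
  revert f h k
  show ∀ f h k : G →₀ A, (Finsupp.sum f fun g a => Finsupp.sum (h + k) fun g' b =>
    (Finsupp.single (g * g') (a * g • b) : G →₀ A)) =
    (Finsupp.sum f fun g a => Finsupp.sum h fun g' b =>
      (Finsupp.single (g * g') (a * g • b) : G →₀ A)) +
    (Finsupp.sum f fun g a => Finsupp.sum k fun g' b =>
      (Finsupp.single (g * g') (a * g • b) : G →₀ A))
  intro f h k
  rw [← Finsupp.sum_add]
  refine Finsupp.sum_congr fun g _ => ?_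
  rw [Finsupp.sum_add_index' (fun g' => by simp) (fun g' b c => by simp [mul_add, smul_add, Finsupp.single_add])]

private theorem add_mul' (f h k : CrossedProduct A G) : (f + h) * k = f * k + h * k := by
  revert f h k
  show ∀ f h k : G →₀ A, (Finsupp.sum (f + h) fun g a => Finsupp.sum k fun g' b =>
    (Finsupp.single (g * g') (a * g • b) : G →₀ A)) =
    (Finsupp.sum f fun g a => Finsupp.sum k fun g' b =>
      (Finsupp.single (g * g') (a * g • b) : G →₀ A)) +
    (Finsupp.sum h fun g a => Finsupp.sum k fun g' b =>
      (Finsupp.single (g * g') (a * g • b) : G →₀ A))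
  intro f h k
  rw [Finsupp.sum_add_index' (fun g => by simp) (fun g a b => ?_)]
  rw [← Finsupp.sum_add]
  refine Finsupp.sum_congr fun g' _ => ?_
  simp [add_mul, Finsupp.single_add]

theorem single_mul_single (g g' : G) (a b : A) :
    (single g a * single g' b : CrossedProduct A G) = single (g * g') (a * g • b) := by
  show (Finsupp.sum (Finsupp.single g a : G →₀ A) fun g a =>
    Finsupp.sum (Finsupp.single g' b : G →₀ A) fun g' b =>
      (Finsupp.single (g * g') (a * g • b) : G →₀ A)) = Finsupp.single (g * g') (a * g • b)
  rw [Finsupp.sum_single_index (by simp), Finsupp.sum_single_index (by simp)]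

private theorem one_mul' (f : CrossedProduct A G) : 1 * f = f := by
  induction f using induction_linear with
  | h0 => exact mul_zero' 1
  | hadd f g hf hg => rw [mul_add', hf, hg]
  | hsingle g a => rw [one_def, single_mul_single, one_mul, one_smul, one_mul]

private theorem mul_one' (f : CrossedProduct A G) : f * 1 = f := by
  induction f using induction_linear with
  | h0 => exact zero_mul' 1
  | hadd f g hf hg => rw [add_mul', hf, hg]
  | hsingle g a => rw [one_def, single_mul_single, mul_one, smul_one, mul_one]

private theorem mul_assoc' (f h k : CrossedProduct A G) : f * h * k = f * (h * k) := by
  induction f using induction_linear with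
  | h0 => rw [zero_mul', zero_mul', zero_mul']
  | hadd f₁ f₂ h₁ h₂ => rw [add_mul', add_mul', add_mul', h₁, h₂]
  | hsingle g a =>
    induction h using induction_linear with
    | h0 => rw [mul_zero', zero_mul', mul_zero']
    | hadd h₁ h₂ ih₁ ih₂ => rw [mul_add', add_mul', ih₁, ih₂, add_mul', mul_add']
    | hsingle g' b =>
      induction k using induction_linear with
      | h0 => rw [mul_zero', mul_zero', mul_zero']
      | hadd k₁ k₂ ih₁ ih₂ => rw [mul_add', ih₁, ih₂, mul_add', mul_add']
      | hsingle g'' c =>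
        rw [single_mul_single, single_mul_single, single_mul_single, single_mul_single,
          mul_assoc, mul_smul, smul_mul', mul_assoc]

noncomputable instance : Ring (CrossedProduct A G) :=
  { (inferInstanceAs (AddCommGroup (CrossedProduct A G)) : AddCommGroup (CrossedProduct A G)),
    (inferInstanceAs (Mul (CrossedProduct A G)) : Mul (CrossedProduct A G)),
    (inferInstanceAs (One (CrossedProduct A G)) : One (CrossedProduct A G)) with
    left_distrib := mul_add'
    right_distrib := add_mul'
    zero_mul := zero_mul'
    mul_zero := mul_zero'
    mul_assoc := mul_assoc'
    one_mul := one_mul'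
    mul_one := mul_one' }

/-- The canonical inclusion of `A` into the crossed product `A⋊G`. -/
noncomputable def ι : A →+* CrossedProduct A G where
  toFun a := single 1 a
  map_one' := rfl
  map_mul' a b := by rw [single_mul_single, one_mul, one_smul]
  map_zero' := single_zero 1
  map_add' a b := single_add 1 a b

end CrossedProduct

end Paper

end


/-! Maschke's averaging argument. A simple Artinian ring is semisimple, so a left ideal `N` of
`A⋊G` has an `A`-linear projection `π`. Averaging the conjugates `x ↦ g · π (g⁻¹ · x)` over `G`
and dividing by `|G|`, a unit of `A` that is central in `A⋊G`, gives an `A⋊G`-linear projection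
onto `N`; its kernel is a complement of `N`. For `G = ℤ/2` and an `ℝ`-algebra, `|G| = 2` is a
unit. -/

noncomputable section

namespace Paper.CrossedProduct

variable {A G : Type*} [Ring A] [Group G] [MulSemiringAction G A]

def of (g : G) : CrossedProduct A G := single g 1

theorem of_one : (of 1 : CrossedProduct A G) = 1 := rfl

theorem of_mul_of (g h : G) : (of g * of h : CrossedProduct A G) = of (g * h) := by
  rw [of, of, of, single_mul_single, smul_one, one_mul]

theorem ι_apply (a : A) : (ι a : CrossedProduct A G) = single 1 a := rfl

theorem ι_mul_of (a : A) (g : G) : ι a * of g = single g a := by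
  rw [of, ι_apply, single_mul_single, one_mul, one_smul, mul_one]

theorem of_mul_ι (g : G) (a : A) : of g * ι a = ι (g • a) * of g := by
  rw [ι_mul_of, of, ι_apply, single_mul_single, mul_one, one_mul]

theorem smul_eq_ι_mul (a : A) (x : CrossedProduct A G) : a • x = ι a * x := by
  induction x using induction_linear with
  | h0 => rw [smul_zero, mul_zero]
  | hadd x y hx hy => rw [smul_add, mul_add, hx, hy]
  | hsingle g b =>
    rw [← ι_mul_of b g, ← mul_assoc, ← map_mul, ι_mul_of (a * b), ι_mul_of b]
    exact Finsupp.smul_single a g b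

instance : IsScalarTower A (CrossedProduct A G) (CrossedProduct A G) where
  smul_assoc a x y := by rw [smul_eq_mul, smul_eq_ι_mul, smul_eq_ι_mul, smul_eq_mul, mul_assoc]

theorem commute_ι_inv_of_isUnit_natCast {n : ℕ} (hn : IsUnit (n : A)) (x : CrossedProduct A G) :
    Commute (ι (↑hn.unit⁻¹ : A)) x := by
  have hι : (ι (↑hn.unit⁻¹ : A) : CrossedProduct A G) =
      ↑(Units.map (ι : A →+* CrossedProduct A G).toMonoidHom hn.unit)⁻¹ := rfl
  rw [hι]
  refine Commute.units_inv_left ?_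
  rw [Units.coe_map, RingHom.toMonoidHom_eq_coe, MonoidHom.coe_coe, IsUnit.unit_spec,
    map_natCast]
  exact Nat.cast_commute n x

def conjugate (g : G) (π : CrossedProduct A G →ₗ[A] CrossedProduct A G) :
    CrossedProduct A G →ₗ[A] CrossedProduct A G where
  toFun x := of g * π (of g⁻¹ * x)
  map_add' x y := by rw [mul_add, map_add, mul_add]
  map_smul' a x := by
    rw [RingHom.id_apply, smul_eq_ι_mul, smul_eq_ι_mul, ← mul_assoc, of_mul_ι, mul_assoc,
      ← smul_eq_ι_mul, map_smul, smul_eq_ι_mul, ← mul_assoc, of_mul_ι, smul_smul, mul_inv_cancel,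
      one_smul, mul_assoc]

theorem conjugate_apply (g : G) (π : CrossedProduct A G →ₗ[A] CrossedProduct A G)
    (x : CrossedProduct A G) : conjugate g π x = of g * π (of g⁻¹ * x) := rfl

variable [Fintype G]

def sumConjugates (π : CrossedProduct A G →ₗ[A] CrossedProduct A G) :
    CrossedProduct A G →ₗ[A] CrossedProduct A G :=
  ∑ g : G, conjugate g π

theorem sumConjugates_apply (π : CrossedProduct A G →ₗ[A] CrossedProduct A G)
    (x : CrossedProduct A G) : sumConjugates π x = ∑ g : G, of g * π (of g⁻¹ * x) := by
  rw [sumConjugates, LinearMap.sum_apply]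
  exact Finset.sum_congr rfl fun g _ => conjugate_apply g π x

theorem sumConjugates_of_mul (π : CrossedProduct A G →ₗ[A] CrossedProduct A G) (h : G)
    (x : CrossedProduct A G) : sumConjugates π (of h * x) = of h * sumConjugates π x := by
  rw [sumConjugates_apply, sumConjugates_apply, Finset.mul_sum,
    ← Equiv.sum_comp (Equiv.mulLeft h)]
  refine Finset.sum_congr rfl fun g _ => ?_
  rw [Equiv.coe_mulLeft, mul_inv_rev, ← of_mul_of h g, ← of_mul_of g⁻¹ h⁻¹, mul_assoc (of g⁻¹),
    ← mul_assoc (of h⁻¹), of_mul_of h⁻¹ h, inv_mul_cancel, of_one, one_mul, mul_assoc]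

theorem sumConjugates_mul (π : CrossedProduct A G →ₗ[A] CrossedProduct A G)
    (s x : CrossedProduct A G) : sumConjugates π (s * x) = s * sumConjugates π x := by
  induction s using induction_linear with
  | h0 => rw [zero_mul, map_zero, zero_mul]
  | hadd s t hs ht => rw [add_mul, map_add, hs, ht, add_mul]
  | hsingle g a =>
    rw [← ι_mul_of, mul_assoc, ← smul_eq_ι_mul, map_smul, sumConjugates_of_mul, smul_eq_ι_mul,
      mul_assoc]

theorem sumConjugates_apply_of_mem {N : Submodule (CrossedProduct A G) (CrossedProduct A G)}
    {π : CrossedProduct A G →ₗ[A] CrossedProduct A G} (hπ : ∀ n ∈ N, π n = n)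
    {n : CrossedProduct A G} (hn : n ∈ N) :
    sumConjugates π n = (Fintype.card G : CrossedProduct A G) * n := by
  calc sumConjugates π n = ∑ _g : G, n := by
        rw [sumConjugates_apply]
        refine Finset.sum_congr rfl fun g _ => ?_
        rw [hπ _ (Ideal.mul_mem_left N _ hn), ← mul_assoc, of_mul_of, mul_inv_cancel, of_one,
          one_mul]
    _ = (Fintype.card G : CrossedProduct A G) * n := by
        rw [Finset.sum_const, Finset.card_univ, nsmul_eq_mul]

theorem exists_retraction_of_isUnit_card (hG : IsUnit (Fintype.card G : A))
    (N : Submodule (CrossedProduct A G) (CrossedProduct A G))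
    (π : CrossedProduct A G →ₗ[A] CrossedProduct A G) (hπN : ∀ x, π x ∈ N)
    (hπ : ∀ n ∈ N, π n = n) :
    ∃ f : CrossedProduct A G →ₗ[CrossedProduct A G] N, ∀ n : N, f n = n := by
  set c : CrossedProduct A G := ι (↑hG.unit⁻¹ : A)
  have hc : ∀ x, Commute c x := commute_ι_inv_of_isUnit_natCast hG
  have hmem : ∀ x, c * sumConjugates π x ∈ N := fun x => by
    rw [sumConjugates_apply]
    exact Ideal.mul_mem_left N c (N.sum_mem fun g _ => Ideal.mul_mem_left N (of g) (hπN _))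
  refine ⟨LinearMap.codRestrict N
    { toFun x := c * sumConjugates π x
      map_add' x y := by rw [map_add, mul_add]
      map_smul' s x := by
        rw [smul_eq_mul, sumConjugates_mul, ← mul_assoc, (hc s).eq, mul_assoc]
        rfl } hmem, fun n => Subtype.ext ?_⟩
  show c * sumConjugates π n = n
  rw [sumConjugates_apply_of_mem hπ n.2, ← mul_assoc, ← map_natCast ι, ← map_mul, hG.val_inv_mul,
    map_one, one_mul]

theorem isSemisimpleRing_of_isUnit_card [IsSemisimpleRing A] (hG : IsUnit (Fintype.card G : A)) :
    IsSemisimpleRing (CrossedProduct A G) where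
  exists_isCompl N := by
    obtain ⟨Q, hQ⟩ := exists_isCompl (N.restrictScalars A)
    obtain ⟨f, hf⟩ := exists_retraction_of_isUnit_card hG N
      ((N.restrictScalars A).subtype ∘ₗ Submodule.projectionOnto _ Q hQ)
      (fun x => (Submodule.projectionOnto _ Q hQ x).2)
      (fun n hn => congrArg Subtype.val (Submodule.projectionOnto_apply_left hQ ⟨n, hn⟩))
    exact ⟨LinearMap.ker f, LinearMap.isCompl_of_proj hf⟩

end Paper.CrossedProduct

end

open Paper in
theorem crossedProduct_of_involution_semisimple_general
    {A : Type*} [Ring A] [Algebra ℝ A] [FiniteDimensional ℝ A] [IsSimpleRing A]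
    [MulSemiringAction (Multiplicative (ZMod 2)) A] :
    IsSemisimpleRing (CrossedProduct A (Multiplicative (ZMod 2))) := by
  have : IsSemisimpleRing A :=
    IsSimpleRing.isSemisimpleRing_iff_isArtinianRing.mpr (IsArtinianRing.of_finite ℝ A)
  refine CrossedProduct.isSemisimpleRing_of_isUnit_card ?_
  have h2 : IsUnit (algebraMap ℝ A 2) := (isUnit_iff_ne_zero.mpr two_ne_zero).map _
  rwa [map_ofNat, ← Nat.cast_ofNat, ← ZMod.card 2, ← Fintype.card_multiplicative] at h2

open Paper in
/-- Let `A` be a finite-dimensional simple `ℝ`-algebra and `τ` a ring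
involution of `A`; let `G = ℤ/2` act on `A` via `τ`.  Then the twisted group ring `A⋊G`
is a semisimple ring. -/
theorem crossedProduct_of_involution_semisimple
    {A : Type*} [Ring A] [Algebra ℝ A] [FiniteDimensional ℝ A] [IsSimpleRing A]
    (τ : A ≃+* A) (hτ : ∀ a, τ (τ a) = a)
    [MulSemiringAction (Multiplicative (ZMod 2)) A]
    (hact : ∀ a : A, (Multiplicative.ofAdd (1 : ZMod 2)) • a = τ a) :
    IsSemisimpleRing (CrossedProduct A (Multiplicative (ZMod 2))) :=
  crossedProduct_of_involution_semisimple_general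
end

section
/- Let A be a finite-dimensional simple ℝ-algebra equipped with an algebra involution τ (an ℝ-algebra automorphism with τ∘τ = id). Let A₀ = {a ∈ A : τ(a) = a} and A₁ = {a ∈ A : τ(a) = -a}. Suppose u ∈ A₁ is such that the map A₀ → A₁ sending a to a·u is bijective (a left A₀-module isomorphism sending 1 to u). Then u is a unit of A. -/
/-- Let `A` be a finite-dimensional simple ℝ-algebra with an algebra
involution `τ`, with even part `A₀ = {a | τ a = a}` and odd part `A₁ = {a | τ a = -a}`.
If `u ∈ A₁` is such that right multiplication by `u` is a bijection from `A₀` onto `A₁`,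
then `u` is a unit of `A`. -/
theorem unit_of_bijective_right_mul
    {A : Type*} [Ring A] [Algebra ℝ A] [FiniteDimensional ℝ A] [IsSimpleRing A]
    (τ : A ≃ₐ[ℝ] A) (hτ : ∀ a, τ (τ a) = a)
    (u : A) (hu : τ u = -u)
    (hbij : Set.BijOn (fun a => a * u) {a : A | τ a = a} {b : A | τ b = -b}) :
    IsUnit u := by
  -- injectivity on the even part
  have inj₀ : ∀ a : A, τ a = a → a * u = 0 → a = 0 := by
    intro a ha h
    have h0 : τ (0 : A) = (0 : A) := map_zero τ
    exact hbij.injOn ha h0 (by simp [h])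
  -- any left annihilator of `u` is odd
  have ann_odd : ∀ a : A, a * u = 0 → τ a = -a := by
    intro a h
    have hτa : (τ a) * u = 0 := by
      have h1 : τ (a * u) = 0 := by rw [h, map_zero]
      rw [map_mul, hu, mul_neg, neg_eq_zero] at h1
      exact h1
    have h0 : (a + τ a) * u = 0 := by rw [add_mul, h, hτa, add_zero]
    have hfix : τ (a + τ a) = a + τ a := by rw [map_add, hτ, add_comm]
    have := inj₀ _ hfix h0
    rw [eq_neg_iff_add_eq_zero, add_comm]; exact this
  -- odd elements kill left annihilators of `u`
  have odd_mul_ann : ∀ b x : A, τ b = -b → x * u = 0 → b * x = 0 := by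
    intro b x hb hx
    have hx1 : τ x = -x := ann_odd x hx
    have hfix : τ (b * x) = b * x := by rw [map_mul, hb, hx1, neg_mul_neg]
    have hmul : (b * x) * u = 0 := by rw [mul_assoc, hx, mul_zero]
    exact inj₀ _ hfix hmul
  -- the two-sided ideal T = {x | ∀ y b, b odd → b * (y * x) = 0}
  let T : TwoSidedIdeal A := TwoSidedIdeal.mk'
    {x : A | ∀ y b : A, τ b = -b → b * (y * x) = 0}
    (by intro y b hb; simp)
    (by intro x z hx hz y b hb
        rw [mul_add, mul_add, hx y b hb, hz y b hb, add_zero])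
    (by intro x hx y b hb
        rw [mul_neg, mul_neg, hx y b hb, neg_zero])
    (by intro x z hz y b hb
        rw [show y * (x * z) = (y * x) * z by noncomm_ring, hz (y * x) b hb])
    (by intro x z hx y b hb
        rw [show b * (y * (x * z)) = (b * (y * x)) * z by noncomm_ring, hx y b hb, zero_mul])
  have hNT : ∀ x : A, x * u = 0 → x ∈ T := by
    intro x hx
    rw [TwoSidedIdeal.mem_mk']
    intro y b hb
    have hyx : (y * x) * u = 0 := by rw [mul_assoc, hx, mul_zero]
    exact odd_mul_ann b (y * x) hb hyx
  have hker : ∀ x : A, x * u = 0 → x = 0 := by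
    rcases IsSimpleRing.simple.eq_bot_or_eq_top T with hT | hT
    · intro x hx
      have := hNT x hx
      rw [hT] at this
      simpa using this
    · -- T = ⊤ means all odd elements vanish, so u = 0 and 1 = 0, contradiction
      exfalso
      have h1 : (1 : A) ∈ T := by rw [hT]; trivial
      rw [TwoSidedIdeal.mem_mk'] at h1
      have hu0 : u = 0 := by
        have := h1 1 u hu
        simpa using this
      have : (1 : A) = 0 := inj₀ 1 (map_one τ) (by rw [hu0, mul_zero])
      exact one_ne_zero this
  -- right multiplication by u is injective, hence surjective
  have hinj : Function.Injective (LinearMap.mulRight ℝ u) := by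
    intro x y h
    simp only [LinearMap.mulRight_apply] at h
    have : (x - y) * u = 0 := by rw [sub_mul, h, sub_self]
    have := hker _ this
    rwa [sub_eq_zero] at this
  have hsurj : Function.Surjective (LinearMap.mulRight ℝ u) :=
    LinearMap.surjective_of_injective hinj
  obtain ⟨a, ha⟩ := hsurj 1
  simp only [LinearMap.mulRight_apply] at ha
  have hua : u * a = 1 := by
    have h2 : (u * a - 1) * u = 0 := by
      rw [sub_mul, one_mul, mul_assoc, ha, mul_one, sub_self]
    have := hker _ h2
    rwa [sub_eq_zero] at this
  exact ⟨⟨u, a, hua, ha⟩, rfl⟩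
end
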